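/- Let the weighted undirected graph a on n nodes be given and let (X*, Y*, Z*, U*, W*, Λ¹*, Λ²*) be an equilibrium of algorithm (CRR-alg). Define, for Y_{vi} ∈ ℝ^{r_i×q} and U_i ∈ ℝ^{m×q} (i = 1,…,n), V₁(Y, U) = (1/2)Σ_{i=1}^n ‖A_{li}Y_{vi} − [F_{vi}]_R − U_i‖_F² + Σ_{i=1}^n ⟨Λ¹_i*, U_i⟩_F + Σ_{i=1}^n ⟨Λ²_i*, [Y_{vi}]_R⟩_F − (1/2)Σ_{i=1}^n ‖A_{li}Y_{vi}* − [F_{vi}]_R − U_i*‖_F². Then V₁(Y, U) ≥ 0 for all Y, U. -/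

import Mathlib

open Matrix

/-- Squared Frobenius norm of a real matrix: `‖M‖_F² = tr (Mᵀ M)`. -/
noncomputable def frobSq {α β : Type*} [Fintype α] [Fintype β] (M : Matrix α β ℝ) : ℝ :=
  Matrix.trace (Mᵀ * M)

/-- Frobenius inner product of real matrices: `⟨M,N⟩_F = tr (Mᵀ N)`. -/
noncomputable def frobInner {α β : Type*} [Fintype α] [Fintype β] (M N : Matrix α β ℝ) : ℝ :=
  Matrix.trace (Mᵀ * N)

/-- The weighted undirected graph with adjacency matrix `a` is connected: any two nodes are
joined by a path of adjacent nodes (nodes `u ≠ v` are adjacent iff `a u v > 0`). -/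
def GraphConnected {n : ℕ} (a : Matrix (Fin n) (Fin n) ℝ) : Prop :=
  ∀ i j : Fin n, Relation.ReflTransGen (fun u v : Fin n => u ≠ v ∧ 0 < a u v) i j

/-- Assemble a family of row blocks `M i ∈ ℝ^{d i × β}` into one matrix. -/
def blockRows {n : ℕ} {d : Fin n → ℕ} {β : Type*} (M : ∀ i, Matrix (Fin (d i)) β ℝ) :
    Matrix ((i : Fin n) × Fin (d i)) β ℝ :=
  Matrix.of fun s j => M s.1 s.2 j

/-- Assemble a family of column blocks `M i ∈ ℝ^{α × d i}` into one matrix. -/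
def blockCols {n : ℕ} {d : Fin n → ℕ} {α : Type*} (M : ∀ i, Matrix α (Fin (d i)) ℝ) :
    Matrix α ((i : Fin n) × Fin (d i)) ℝ :=
  Matrix.of fun k s => M s.1 k s.2

/-- The `i`-th row block of a matrix whose rows are partitioned according to `d`. -/
def rowBlk {n : ℕ} {d : Fin n → ℕ} {β : Type*}
    (Y : Matrix ((i : Fin n) × Fin (d i)) β ℝ) (i : Fin n) :
    Matrix (Fin (d i)) β ℝ :=
  Matrix.of fun k j => Y ⟨i, k⟩ j

/-- `[M]_R`: the matrix whose `i`-th row block is `M` and whose other row blocks are zero. -/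
def embedRow {n : ℕ} {d : Fin n → ℕ} {β : Type*} (i : Fin n)
    (M : Matrix (Fin (d i)) β ℝ) :
    Matrix ((i' : Fin n) × Fin (d i')) β ℝ :=
  Matrix.of fun s j => if h : s.1 = i then M (Fin.cast (congrArg d h) s.2) j else 0

/-- `[M]_C`: the matrix whose `i`-th column block is `M` and whose other column blocks are zero. -/
def embedCol {n : ℕ} {d : Fin n → ℕ} {α : Type*} (i : Fin n)
    (M : Matrix α (Fin (d i)) ℝ) :
    Matrix α ((i' : Fin n) × Fin (d i')) ℝ :=
  Matrix.of fun k s => if h : s.1 = i then M k (Fin.cast (congrArg d h) s.2) else 0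

/-- Feasibility for problem (CRR-opt). -/
def CRRfeas {n q : ℕ} {rdim mdim pdim : Fin n → ℕ}
    (a : Matrix (Fin n) (Fin n) ℝ)
    (Bv : ∀ i, Matrix (Fin (pdim i)) (Fin q) ℝ)
    (Xl : ∀ i, Matrix ((i' : Fin n) × Fin (rdim i')) (Fin (pdim i)) ℝ)
    (Yv : ∀ i, Matrix (Fin (rdim i)) (Fin q) ℝ)
    (Z : Fin n → Matrix ((i : Fin n) × Fin (rdim i)) (Fin q) ℝ)
    (U W : Fin n → Matrix ((i : Fin n) × Fin (mdim i)) (Fin q) ℝ) : Prop :=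
  (∀ i, embedRow i (Yv i) - Xl i * Bv i - ∑ j, a i j • (Z i - Z j) = 0) ∧
  (∀ i, U i = ∑ j, a i j • (W i - W j))

/-- Objective of problem (CRR-opt): `Σ_i ‖A_{li} Y_{vi} − [F_{vi}]_R − U_i‖_F²`. -/
noncomputable def CRRobj {n q : ℕ} {rdim mdim : Fin n → ℕ}
    (Al : ∀ i, Matrix ((i' : Fin n) × Fin (mdim i')) (Fin (rdim i)) ℝ)
    (Fv : ∀ i, Matrix (Fin (mdim i)) (Fin q) ℝ)
    (Yv : ∀ i, Matrix (Fin (rdim i)) (Fin q) ℝ)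
    (U : Fin n → Matrix ((i : Fin n) × Fin (mdim i)) (Fin q) ℝ) : ℝ :=
  ∑ i, frobSq (Al i * Yv i - embedRow i (Fv i) - U i)

/-- Right-hand side of the `X_{li}`-equation in algorithm (CRR-alg). -/
noncomputable def CRRrhsX {n q : ℕ} {rdim pdim : Fin n → ℕ}
    (Bv : ∀ i, Matrix (Fin (pdim i)) (Fin q) ℝ)
    (L2 : Fin n → Matrix ((i : Fin n) × Fin (rdim i)) (Fin q) ℝ) (i : Fin n) :
    Matrix ((i' : Fin n) × Fin (rdim i')) (Fin (pdim i)) ℝ :=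
  L2 i * (Bv i)ᵀ

/-- Right-hand side of the `Y_{vi}`-equation in algorithm (CRR-alg). -/
noncomputable def CRRrhsY {n q : ℕ} {rdim mdim : Fin n → ℕ}
    (Al : ∀ i, Matrix ((i' : Fin n) × Fin (mdim i')) (Fin (rdim i)) ℝ)
    (Fv : ∀ i, Matrix (Fin (mdim i)) (Fin q) ℝ)
    (Yv : ∀ i, Matrix (Fin (rdim i)) (Fin q) ℝ)
    (U : Fin n → Matrix ((i : Fin n) × Fin (mdim i)) (Fin q) ℝ)
    (L2 : Fin n → Matrix ((i : Fin n) × Fin (rdim i)) (Fin q) ℝ) (i : Fin n) :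
    Matrix (Fin (rdim i)) (Fin q) ℝ :=
  -((Al i)ᵀ * (Al i * Yv i - embedRow i (Fv i) - U i)) - rowBlk (L2 i) i

/-- Right-hand side of the `U_i`-equation in algorithm (CRR-alg). -/
noncomputable def CRRrhsU {n q : ℕ} {rdim mdim : Fin n → ℕ}
    (Al : ∀ i, Matrix ((i' : Fin n) × Fin (mdim i')) (Fin (rdim i)) ℝ)
    (Fv : ∀ i, Matrix (Fin (mdim i)) (Fin q) ℝ)
    (Yv : ∀ i, Matrix (Fin (rdim i)) (Fin q) ℝ)
    (U L1 : Fin n → Matrix ((i : Fin n) × Fin (mdim i)) (Fin q) ℝ) (i : Fin n) :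
    Matrix ((i : Fin n) × Fin (mdim i)) (Fin q) ℝ :=
  Al i * Yv i - embedRow i (Fv i) - U i - L1 i

/-- Right-hand side of the `W_i`-equation in algorithm (CRR-alg). -/
noncomputable def CRRrhsW {n q : ℕ} {mdim : Fin n → ℕ}
    (a : Matrix (Fin n) (Fin n) ℝ)
    (L1 : Fin n → Matrix ((i : Fin n) × Fin (mdim i)) (Fin q) ℝ) (i : Fin n) :
    Matrix ((i : Fin n) × Fin (mdim i)) (Fin q) ℝ :=
  ∑ j, a i j • (L1 i - L1 j)

/-- Right-hand side of the `Z_i`-equation in algorithm (CRR-alg). -/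
noncomputable def CRRrhsZ {n q : ℕ} {rdim : Fin n → ℕ}
    (a : Matrix (Fin n) (Fin n) ℝ)
    (L2 : Fin n → Matrix ((i : Fin n) × Fin (rdim i)) (Fin q) ℝ) (i : Fin n) :
    Matrix ((i : Fin n) × Fin (rdim i)) (Fin q) ℝ :=
  ∑ j, a i j • (L2 i - L2 j)

/-- Right-hand side of the `Λ¹_i`-equation in algorithm (CRR-alg), with the derivative
feedback replaced by the right-hand side that determines it. -/
noncomputable def CRRrhsL1 {n q : ℕ} {rdim mdim : Fin n → ℕ}
    (a : Matrix (Fin n) (Fin n) ℝ)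
    (Al : ∀ i, Matrix ((i' : Fin n) × Fin (mdim i')) (Fin (rdim i)) ℝ)
    (Fv : ∀ i, Matrix (Fin (mdim i)) (Fin q) ℝ)
    (Yv : ∀ i, Matrix (Fin (rdim i)) (Fin q) ℝ)
    (U W L1 : Fin n → Matrix ((i : Fin n) × Fin (mdim i)) (Fin q) ℝ) (i : Fin n) :
    Matrix ((i : Fin n) × Fin (mdim i)) (Fin q) ℝ :=
  U i + CRRrhsU Al Fv Yv U L1 i - ∑ j, a i j • (W i - W j) - ∑ j, a i j • (L1 i - L1 j)

/-- Right-hand side of the `Λ²_i`-equation in algorithm (CRR-alg), with the derivative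
feedbacks replaced by the right-hand sides that determine them. -/
noncomputable def CRRrhsL2 {n q : ℕ} {rdim mdim pdim : Fin n → ℕ}
    (a : Matrix (Fin n) (Fin n) ℝ)
    (Al : ∀ i, Matrix ((i' : Fin n) × Fin (mdim i')) (Fin (rdim i)) ℝ)
    (Bv : ∀ i, Matrix (Fin (pdim i)) (Fin q) ℝ)
    (Fv : ∀ i, Matrix (Fin (mdim i)) (Fin q) ℝ)
    (Xl : ∀ i, Matrix ((i' : Fin n) × Fin (rdim i')) (Fin (pdim i)) ℝ)
    (Yv : ∀ i, Matrix (Fin (rdim i)) (Fin q) ℝ)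
    (Z : Fin n → Matrix ((i : Fin n) × Fin (rdim i)) (Fin q) ℝ)
    (U : Fin n → Matrix ((i : Fin n) × Fin (mdim i)) (Fin q) ℝ)
    (L2 : Fin n → Matrix ((i : Fin n) × Fin (rdim i)) (Fin q) ℝ) (i : Fin n) :
    Matrix ((i : Fin n) × Fin (rdim i)) (Fin q) ℝ :=
  embedRow i (Yv i) + embedRow i (CRRrhsY Al Fv Yv U L2 i) - Xl i * Bv i
    - ∑ j, a i j • (Z i - Z j) - ∑ j, a i j • (L2 i - L2 j)
    - CRRrhsX Bv L2 i * Bv i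

/-- Equilibrium of algorithm (CRR-alg): all right-hand sides vanish. -/
noncomputable def CRRequil {n q : ℕ} {rdim mdim pdim : Fin n → ℕ}
    (a : Matrix (Fin n) (Fin n) ℝ)
    (Al : ∀ i, Matrix ((i' : Fin n) × Fin (mdim i')) (Fin (rdim i)) ℝ)
    (Bv : ∀ i, Matrix (Fin (pdim i)) (Fin q) ℝ)
    (Fv : ∀ i, Matrix (Fin (mdim i)) (Fin q) ℝ)
    (Xl : ∀ i, Matrix ((i' : Fin n) × Fin (rdim i')) (Fin (pdim i)) ℝ)
    (Yv : ∀ i, Matrix (Fin (rdim i)) (Fin q) ℝ)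
    (Z : Fin n → Matrix ((i : Fin n) × Fin (rdim i)) (Fin q) ℝ)
    (U W L1 : Fin n → Matrix ((i : Fin n) × Fin (mdim i)) (Fin q) ℝ)
    (L2 : Fin n → Matrix ((i : Fin n) × Fin (rdim i)) (Fin q) ℝ) : Prop :=
  ∀ i, CRRrhsX Bv L2 i = 0 ∧ CRRrhsY Al Fv Yv U L2 i = 0 ∧
    CRRrhsU Al Fv Yv U L1 i = 0 ∧ CRRrhsW a L1 i = 0 ∧ CRRrhsZ a L2 i = 0 ∧
    CRRrhsL1 a Al Fv Yv U W L1 i = 0 ∧ CRRrhsL2 a Al Bv Fv Xl Yv Z U L2 i = 0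

/-! At an equilibrium, write `E*ᵢ = A_{li} Y*_{vi} − [F_{vi}]_R − U*ᵢ`. The `U`- and `Y`-equations give
`Λ¹*ᵢ = E*ᵢ` and `(Λ²*ᵢ)^{vi} = −A_{li}ᵀ E*ᵢ`, so the linear part of `V₁` is
`Σᵢ ⟨E*ᵢ, Uᵢ − A_{li} Y_{vi}⟩`. At `(Y*, U*)` this pairing vanishes: `U*` and `[Y*_{vi}]_R − X*_{li} B_{vi}`
are weighted-Laplacian images, the Laplacian is self-adjoint for symmetric weights, and it kills
`Λ¹*` and `Λ²*`, while `Λ²*ᵢ B_{vi}ᵀ = 0`. Subtracting this zero turns `V₁` into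
`½ Σᵢ ‖Eᵢ − E*ᵢ‖_F²`. -/

open Finset

section Frobenius

variable {α β γ : Type*} [Fintype α] [Fintype β] [Fintype γ]

lemma frobInner_comm (M N : Matrix α β ℝ) : frobInner M N = frobInner N M := by
  rw [frobInner, ← trace_transpose, transpose_mul, transpose_transpose, frobInner]

lemma frobInner_add_right (M N P : Matrix α β ℝ) :
    frobInner M (N + P) = frobInner M N + frobInner M P := by
  simp [frobInner, Matrix.mul_add]

lemma frobInner_sub_right (M N P : Matrix α β ℝ) :
    frobInner M (N - P) = frobInner M N - frobInner M P := by
  simp [frobInner, Matrix.mul_sub]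

lemma frobInner_neg_right (M N : Matrix α β ℝ) : frobInner M (-N) = -frobInner M N := by
  simp [frobInner]

lemma frobInner_zero_left (M : Matrix α β ℝ) : frobInner 0 M = 0 := by
  simp [frobInner]

lemma frobInner_zero_right (M : Matrix α β ℝ) : frobInner M 0 = 0 := by
  simp [frobInner]

lemma frobInner_smul_right (c : ℝ) (M N : Matrix α β ℝ) :
    frobInner M (c • N) = c * frobInner M N := by
  simp [frobInner]

lemma frobInner_sum_right {ι : Type*} (s : Finset ι) (M : Matrix α β ℝ)
    (f : ι → Matrix α β ℝ) :
    frobInner M (∑ j ∈ s, f j) = ∑ j ∈ s, frobInner M (f j) := by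
  simp [frobInner, Matrix.mul_sum]

lemma frobInner_mul_left (A : Matrix α γ ℝ) (M : Matrix γ β ℝ) (N : Matrix α β ℝ) :
    frobInner (A * M) N = frobInner M (Aᵀ * N) := by
  simp [frobInner, transpose_mul, Matrix.mul_assoc]

lemma frobInner_mul_right (L : Matrix α β ℝ) (X : Matrix α γ ℝ) (B : Matrix γ β ℝ) :
    frobInner L (X * B) = frobInner (L * Bᵀ) X := by
  rw [frobInner, frobInner, transpose_mul, transpose_transpose, trace_mul_comm,
    Matrix.mul_assoc, trace_mul_comm X]

lemma frobInner_eq_sum (M N : Matrix α β ℝ) : frobInner M N = ∑ k, ∑ j, M k j * N k j := by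
  rw [frobInner, trace, sum_comm]
  simp [mul_apply]

lemma frobSq_nonneg (M : Matrix α β ℝ) : 0 ≤ frobSq M := by
  simpa [frobSq] using (posSemidef_conjTranspose_mul_self M).trace_nonneg

lemma frobSq_sub (M N : Matrix α β ℝ) :
    frobSq (M - N) = frobSq M - 2 * frobInner N M + frobSq N := by
  have hM := frobInner_comm M N
  simp only [frobSq, frobInner, transpose_sub, Matrix.sub_mul, Matrix.mul_sub, trace_sub] at hM ⊢
  linarith

lemma half_frobSq_add_frobInner_sub_sub (M N : Matrix α β ℝ) :
    1 / 2 * frobSq M + frobInner N (N - M) - 1 / 2 * frobSq N = 1 / 2 * frobSq (M - N) := by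
  have hNN : frobInner N N = frobSq N := rfl
  rw [frobSq_sub, frobInner_sub_right, hNN]
  ring

end Frobenius

lemma frobInner_embedRow {n : ℕ} {d : Fin n → ℕ} {β : Type*} [Fintype β]
    (i : Fin n) (M : Matrix (Fin (d i)) β ℝ) (Y : Matrix ((i' : Fin n) × Fin (d i')) β ℝ) :
    frobInner (embedRow i M) Y = frobInner M (rowBlk Y i) := by
  simp only [frobInner_eq_sum, Fintype.sum_sigma]
  rw [Fintype.sum_eq_single i fun i' hne => by simp [embedRow, hne]]
  simp [embedRow, rowBlk]

lemma embedRow_zero {n : ℕ} {d : Fin n → ℕ} {β : Type*} (i : Fin n) :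
    embedRow (d := d) (β := β) i 0 = 0 := by
  ext s j
  simp [embedRow]

def weightedLaplacian {n : ℕ} {M : Type*} [AddCommGroup M] [Module ℝ M]
    (a : Matrix (Fin n) (Fin n) ℝ) (P : Fin n → M) (i : Fin n) : M :=
  ∑ j, a i j • (P i - P j)

lemma sum_frobInner_weightedLaplacian_comm {n : ℕ} {α β : Type*} [Fintype α] [Fintype β]
    {a : Matrix (Fin n) (Fin n) ℝ} (hsym : ∀ i j, a i j = a j i) (P Q : Fin n → Matrix α β ℝ) :
    ∑ i, frobInner (P i) (weightedLaplacian a Q i)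
      = ∑ i, frobInner (Q i) (weightedLaplacian a P i) := by
  simp only [weightedLaplacian, frobInner_sum_right, frobInner_smul_right, frobInner_sub_right,
    mul_sub, sum_sub_distrib]
  congr 1
  · simp only [frobInner_comm (P _) (Q _)]
  · rw [sum_comm]
    simp only [hsym, frobInner_comm (P _) (Q _)]

namespace CRRequil

variable {n q : ℕ} {rdim mdim pdim : Fin n → ℕ} {a : Matrix (Fin n) (Fin n) ℝ}
  {Al : ∀ i, Matrix ((i' : Fin n) × Fin (mdim i')) (Fin (rdim i)) ℝ}
  {Bv : ∀ i, Matrix (Fin (pdim i)) (Fin q) ℝ} {Fv : ∀ i, Matrix (Fin (mdim i)) (Fin q) ℝ}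
  {Xl : ∀ i, Matrix ((i' : Fin n) × Fin (rdim i')) (Fin (pdim i)) ℝ}
  {Ys : ∀ i, Matrix (Fin (rdim i)) (Fin q) ℝ} {Z : Fin n → Matrix ((i : Fin n) × Fin (rdim i)) (Fin q) ℝ}
  {Us W L1 : Fin n → Matrix ((i : Fin n) × Fin (mdim i)) (Fin q) ℝ}
  {L2 : Fin n → Matrix ((i : Fin n) × Fin (rdim i)) (Fin q) ℝ}

lemma dual1_eq (h : CRRequil a Al Bv Fv Xl Ys Z Us W L1 L2) (i : Fin n) :
    L1 i = Al i * Ys i - embedRow i (Fv i) - Us i :=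
  (sub_eq_zero.mp (h i).2.2.1).symm

lemma rowBlk_dual2_eq (h : CRRequil a Al Bv Fv Xl Ys Z Us W L1 L2) (i : Fin n) :
    rowBlk (L2 i) i = -((Al i)ᵀ * (Al i * Ys i - embedRow i (Fv i) - Us i)) :=
  (sub_eq_zero.mp (h i).2.1).symm

lemma u_eq_weightedLaplacian (h : CRRequil a Al Bv Fv Xl Ys Z Us W L1 L2) (i : Fin n) :
    Us i = weightedLaplacian a W i := by
  have hL1 := (h i).2.2.2.2.2.1
  have hW : ∑ j, a i j • (L1 i - L1 j) = 0 := (h i).2.2.2.1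
  rw [CRRrhsL1, (h i).2.2.1, hW, add_zero, sub_zero, sub_eq_zero] at hL1
  exact hL1

lemma embedRow_y_eq (h : CRRequil a Al Bv Fv Xl Ys Z Us W L1 L2) (i : Fin n) :
    embedRow i (Ys i) = Xl i * Bv i + weightedLaplacian a Z i := by
  have hL2 := (h i).2.2.2.2.2.2
  have hZ : ∑ j, a i j • (L2 i - L2 j) = 0 := (h i).2.2.2.2.1
  rw [CRRrhsL2, (h i).2.1, hZ, (h i).1, embedRow_zero, Matrix.zero_mul] at hL2
  rw [← sub_eq_zero, ← hL2, weightedLaplacian]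
  abel

lemma frobInner_dual_add (h : CRRequil a Al Bv Fv Xl Ys Z Us W L1 L2) (i : Fin n)
    (Y : Matrix (Fin (rdim i)) (Fin q) ℝ) (V : Matrix ((i : Fin n) × Fin (mdim i)) (Fin q) ℝ) :
    frobInner (L1 i) V + frobInner (L2 i) (embedRow i Y)
      = frobInner (Al i * Ys i - embedRow i (Fv i) - Us i) (V - Al i * Y) := by
  rw [frobInner_comm (L2 i), frobInner_embedRow, h.rowBlk_dual2_eq, frobInner_neg_right,
    ← frobInner_mul_left, frobInner_comm (Al i * Y), h.dual1_eq, frobInner_sub_right]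
  ring

lemma sum_dual_pairing_self_eq_zero (h : CRRequil a Al Bv Fv Xl Ys Z Us W L1 L2)
    (hsym : ∀ i j, a i j = a j i) :
    ∑ i, frobInner (L1 i) (Us i) + ∑ i, frobInner (L2 i) (embedRow i (Ys i)) = 0 := by
  have hL1 : ∀ i, weightedLaplacian a L1 i = 0 := fun i => (h i).2.2.2.1
  have hL2 : ∀ i, weightedLaplacian a L2 i = 0 := fun i => (h i).2.2.2.2.1
  have hL2B : ∀ i, L2 i * (Bv i)ᵀ = 0 := fun i => (h i).1
  simp only [h.u_eq_weightedLaplacian, h.embedRow_y_eq, frobInner_add_right, frobInner_mul_right,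
    hL2B, sum_add_distrib, sum_frobInner_weightedLaplacian_comm hsym _ W,
    sum_frobInner_weightedLaplacian_comm hsym _ Z, hL1, hL2, frobInner_zero_left,
    frobInner_zero_right, sum_const_zero, add_zero]

lemma sum_dual_pairing_eq (h : CRRequil a Al Bv Fv Xl Ys Z Us W L1 L2)
    (hsym : ∀ i j, a i j = a j i) (Y : ∀ i, Matrix (Fin (rdim i)) (Fin q) ℝ)
    (V : Fin n → Matrix ((i : Fin n) × Fin (mdim i)) (Fin q) ℝ) :
    ∑ i, frobInner (L1 i) (V i) + ∑ i, frobInner (L2 i) (embedRow i (Y i))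
      = ∑ i, frobInner (Al i * Ys i - embedRow i (Fv i) - Us i)
          ((Al i * Ys i - embedRow i (Fv i) - Us i) - (Al i * Y i - embedRow i (Fv i) - V i)) := by
  have h0 := h.sum_dual_pairing_self_eq_zero hsym
  rw [← sum_add_distrib] at h0 ⊢
  rw [← sub_zero (∑ i, _), ← h0, ← sum_sub_distrib]
  refine sum_congr rfl fun i _ => ?_
  rw [h.frobInner_dual_add, h.frobInner_dual_add, ← frobInner_sub_right]
  congr 1
  abel

end CRRequil

theorem stmt_17_general (n q : ℕ) (rdim mdim pdim : Fin n → ℕ)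
    (a : Matrix (Fin n) (Fin n) ℝ)
    (hsym : ∀ i j, a i j = a j i)
    (Al : ∀ i, Matrix ((i' : Fin n) × Fin (mdim i')) (Fin (rdim i)) ℝ)
    (Bv : ∀ i, Matrix (Fin (pdim i)) (Fin q) ℝ)
    (Fv : ∀ i, Matrix (Fin (mdim i)) (Fin q) ℝ)
    (Xls : ∀ i, Matrix ((i' : Fin n) × Fin (rdim i')) (Fin (pdim i)) ℝ)
    (Ys : ∀ i, Matrix (Fin (rdim i)) (Fin q) ℝ)
    (Zs : Fin n → Matrix ((i : Fin n) × Fin (rdim i)) (Fin q) ℝ)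
    (Us Ws L1s : Fin n → Matrix ((i : Fin n) × Fin (mdim i)) (Fin q) ℝ)
    (L2s : Fin n → Matrix ((i : Fin n) × Fin (rdim i)) (Fin q) ℝ)
    (hequil : CRRequil a Al Bv Fv Xls Ys Zs Us Ws L1s L2s)
    (Yv : ∀ i, Matrix (Fin (rdim i)) (Fin q) ℝ)
    (U : Fin n → Matrix ((i : Fin n) × Fin (mdim i)) (Fin q) ℝ) :
    0 ≤ (1 / 2) * (∑ i, frobSq (Al i * Yv i - embedRow i (Fv i) - U i))
        + (∑ i, frobInner (L1s i) (U i))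
        + (∑ i, frobInner (L2s i) (embedRow i (Yv i)))
        - (1 / 2) * (∑ i, frobSq (Al i * Ys i - embedRow i (Fv i) - Us i)) := by
  rw [add_assoc, hequil.sum_dual_pairing_eq hsym Yv U, mul_sum, mul_sum, ← sum_add_distrib,
    ← sum_sub_distrib]
  refine sum_nonneg fun i _ => ?_
  rw [half_frobSq_add_frobInner_sub_sub]
  exact mul_nonneg (by norm_num) (frobSq_nonneg _)

theorem stmt_17 (n q : ℕ) (rdim mdim pdim : Fin n → ℕ)
    (a : Matrix (Fin n) (Fin n) ℝ)
    (hsym : ∀ i j, a i j = a j i) (hnonneg : ∀ i j, 0 ≤ a i j)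
    (hdiag : ∀ i, a i i = 0)
    (Al : ∀ i, Matrix ((i' : Fin n) × Fin (mdim i')) (Fin (rdim i)) ℝ)
    (Bv : ∀ i, Matrix (Fin (pdim i)) (Fin q) ℝ)
    (Fv : ∀ i, Matrix (Fin (mdim i)) (Fin q) ℝ)
    (Xls : ∀ i, Matrix ((i' : Fin n) × Fin (rdim i')) (Fin (pdim i)) ℝ)
    (Ys : ∀ i, Matrix (Fin (rdim i)) (Fin q) ℝ)
    (Zs : Fin n → Matrix ((i : Fin n) × Fin (rdim i)) (Fin q) ℝ)
    (Us Ws L1s : Fin n → Matrix ((i : Fin n) × Fin (mdim i)) (Fin q) ℝ)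
    (L2s : Fin n → Matrix ((i : Fin n) × Fin (rdim i)) (Fin q) ℝ)
    (hequil : CRRequil a Al Bv Fv Xls Ys Zs Us Ws L1s L2s)
    (Yv : ∀ i, Matrix (Fin (rdim i)) (Fin q) ℝ)
    (U : Fin n → Matrix ((i : Fin n) × Fin (mdim i)) (Fin q) ℝ) :
    0 ≤ (1 / 2) * (∑ i, frobSq (Al i * Yv i - embedRow i (Fv i) - U i))
        + (∑ i, frobInner (L1s i) (U i))
        + (∑ i, frobInner (L2s i) (embedRow i (Yv i)))
        - (1 / 2) * (∑ i, frobSq (Al i * Ys i - embedRow i (Fv i) - Us i)) :=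
  stmt_17_general n q rdim mdim pdim a hsym Al Bv Fv Xls Ys Zs Us Ws L1s L2s hequil Yv U
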